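/- arXiv:2403.13624 — 4 statements merged into one kernel-verified Lean document; each statement's English description precedes it below -/
import Mathlib

section
/- Let f be a partial coarse embedding between coarse spaces X and Y (i.e. a partial coarse map whose transpose is also a partial coarse map). Then the following are equivalent: (i) f is a coarse equivalence; (ii) the transpose f^op is a coarse equivalence; (iii) f and f^op are coarse inverses of one another; (iv) both f and f^op are coarsely surjective; (v) both f and f^op are coarsely everywhere defined. -/
/-- Composition of relations. -/
def relComp {X Y Z : Type*} (S : Set (Z × Y)) (R : Set (Y × X)) : Set (Z × X) :=
  {p | ∃ y, (p.1, y) ∈ S ∧ (y, p.2) ∈ R}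

/-- Transposition of a relation. -/
def relOp {X Y : Type*} (R : Set (Y × X)) : Set (X × Y) := {p | (p.2, p.1) ∈ R}

/-- A coarse structure on a set `X`. -/
structure CoarseStructure (X : Type*) where
  ents : Set (Set (X × X))
  mem_of_subset : ∀ {E F : Set (X × X)}, E ∈ ents → F ⊆ E → F ∈ ents
  union_mem : ∀ {E F : Set (X × X)}, E ∈ ents → F ∈ ents → E ∪ F ∈ ents
  diag_mem : {p : X × X | p.1 = p.2} ∈ ents
  op_mem : ∀ {E : Set (X × X)}, E ∈ ents → relOp E ∈ ents
  comp_mem : ∀ {E F : Set (X × X)}, E ∈ ents → F ∈ ents → relComp E F ∈ ents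

variable {X Y : Type*}

/-- A relation `R ⊆ Y × X` is controlled if `R ∘ E ∘ Rᵒᵖ` is an entourage of `Y` for every
entourage `E` of `X` (equivalently, `(R ⊗ R)(E)` is an entourage). -/
def Controlled (𝓔 : CoarseStructure X) (𝓕 : CoarseStructure Y) (R : Set (Y × X)) : Prop :=
  ∀ E ∈ 𝓔.ents, relComp R (relComp E (relOp R)) ∈ 𝓕.ents

/-- A subset `A ⊆ X` is coarsely dense if `X` is contained in a controlled thickening
of `A`. -/
def CoarselyDense (𝓔 : CoarseStructure X) (A : Set X) : Prop :=
  ∃ E ∈ 𝓔.ents, ∀ x : X, ∃ a ∈ A, (x, a) ∈ E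

/-- `R` is coarsely everywhere defined: its projection to `X` is coarsely dense. -/
def CoarselyEverywhereDefined (𝓔 : CoarseStructure X) (R : Set (Y × X)) : Prop :=
  CoarselyDense 𝓔 {x | ∃ y, (y, x) ∈ R}

/-- `R` is coarsely surjective: its projection to `Y` is coarsely dense. -/
def CoarselySurjective (𝓕 : CoarseStructure Y) (R : Set (Y × X)) : Prop :=
  CoarselyDense 𝓕 {y | ∃ x, (y, x) ∈ R}

/-- Two relations `R, R' ⊆ Y × X` are close if each is contained in a controlled thickening
of the other (i.e. they are asymptotic in the product coarse structure `Y × X`). -/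
def Close (𝓔 : CoarseStructure X) (𝓕 : CoarseStructure Y) (R R' : Set (Y × X)) : Prop :=
  ∃ E ∈ 𝓔.ents, ∃ F ∈ 𝓕.ents,
    (∀ p ∈ R, ∃ q ∈ R', (p.1, q.1) ∈ F ∧ (p.2, q.2) ∈ E) ∧
    (∀ q ∈ R', ∃ p ∈ R, (q.1, p.1) ∈ F ∧ (q.2, p.2) ∈ E)

/-- A controlled relation `R ⊆ Y × X` represents a coarse equivalence: it is a coarse map
(controlled and coarsely everywhere defined) admitting a coarse inverse, i.e. a coarse map
`S` from `Y` to `X` such that both compositions are close to the respective identities. -/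
def IsCoarseEquivalence (𝓔 : CoarseStructure X) (𝓕 : CoarseStructure Y)
    (R : Set (Y × X)) : Prop :=
  Controlled 𝓔 𝓕 R ∧ CoarselyEverywhereDefined 𝓔 R ∧
    ∃ S : Set (X × Y), Controlled 𝓕 𝓔 S ∧ CoarselyEverywhereDefined 𝓕 S ∧
      Close 𝓕 𝓕 (relComp R S) {p : Y × Y | p.1 = p.2} ∧
      Close 𝓔 𝓔 (relComp S R) {p : X × X | p.1 = p.2}

lemma close_op_comp (𝓔 : CoarseStructure X) (𝓕 : CoarseStructure Y)
    (R : Set (Y × X)) (hRop : Controlled 𝓕 𝓔 (relOp R))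
    (h1 : CoarselyEverywhereDefined 𝓔 R) :
    Close 𝓔 𝓔 (relComp (relOp R) R) {p : X × X | p.1 = p.2} := by
  obtain ⟨E, hE, hEd⟩ := h1
  have hD : relComp (relOp R) (relComp {p : Y × Y | p.1 = p.2} (relOp (relOp R))) ∈ 𝓔.ents :=
    hRop _ 𝓕.diag_mem
  set D := relComp (relOp R) (relComp {p : Y × Y | p.1 = p.2} (relOp (relOp R))) with hDdef
  refine ⟨({p : X × X | p.1 = p.2} ∪ D) ∪ E, ?_, ({p : X × X | p.1 = p.2} ∪ D) ∪ E, ?_, ?_, ?_⟩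
  · exact 𝓔.union_mem (𝓔.union_mem 𝓔.diag_mem hD) hE
  · exact 𝓔.union_mem (𝓔.union_mem 𝓔.diag_mem hD) hE
  · rintro ⟨x₁, x₂⟩ ⟨y, hy1, hy2⟩
    exact ⟨(x₁, x₁), rfl, Or.inl (Or.inl rfl), Or.inl (Or.inr ⟨y, hy2, y, rfl, hy1⟩)⟩
  · rintro ⟨x, x'⟩ (h : x = x')
    obtain ⟨a, ⟨y, hya⟩, hxa⟩ := hEd x
    subst h
    exact ⟨(a, a), ⟨y, hya, hya⟩, Or.inr hxa, Or.inr hxa⟩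

lemma surj_of_equiv (𝓔 : CoarseStructure X) (𝓕 : CoarseStructure Y)
    (R : Set (Y × X)) (h : IsCoarseEquivalence 𝓔 𝓕 R) :
    CoarselyDense 𝓕 {y | ∃ x, (y, x) ∈ R} := by
  obtain ⟨-, -, S, -, -, ⟨E, hE, F, hF, -, hclose⟩, -⟩ := h
  refine ⟨F, hF, fun y => ?_⟩
  obtain ⟨p, ⟨x, hp1, hp2⟩, hF1, hE1⟩ := hclose (y, y) rfl
  exact ⟨p.1, ⟨x, hp1⟩, hF1⟩

/-- For a partial coarse embedding `f` (represented by a controlled relation `R` whose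
transpose is also controlled), the following are equivalent:
(i) `f` is a coarse equivalence; (ii) `fᵒᵖ` is a coarse equivalence;
(iii) `f` and `fᵒᵖ` are coarse inverses of one another;
(iv) both `f` and `fᵒᵖ` are coarsely surjective;
(v) both `f` and `fᵒᵖ` are coarsely everywhere defined. -/
theorem stmt8 (𝓔 : CoarseStructure X) (𝓕 : CoarseStructure Y) (R : Set (Y × X))
    (hR : Controlled 𝓔 𝓕 R) (hRop : Controlled 𝓕 𝓔 (relOp R)) :
    [IsCoarseEquivalence 𝓔 𝓕 R,
     IsCoarseEquivalence 𝓕 𝓔 (relOp R),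
     CoarselyEverywhereDefined 𝓔 R ∧ CoarselyEverywhereDefined 𝓕 (relOp R) ∧
       Close 𝓕 𝓕 (relComp R (relOp R)) {p : Y × Y | p.1 = p.2} ∧
       Close 𝓔 𝓔 (relComp (relOp R) R) {p : X × X | p.1 = p.2},
     CoarselySurjective 𝓕 R ∧ CoarselySurjective 𝓔 (relOp R),
     CoarselyEverywhereDefined 𝓔 R ∧ CoarselyEverywhereDefined 𝓕 (relOp R)].TFAE := by
  tfae_have 3 → 1 := fun ⟨h1, h2, c1, c2⟩ => ⟨hR, h1, relOp R, hRop, h2, c1, c2⟩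
  tfae_have 3 → 2 := fun ⟨h1, h2, c1, c2⟩ => ⟨hRop, h2, R, hR, h1, c2, c1⟩
  tfae_have 1 → 5 := fun h => ⟨h.2.1, surj_of_equiv 𝓔 𝓕 R h⟩
  tfae_have 2 → 5 := fun h => ⟨surj_of_equiv 𝓕 𝓔 (relOp R) h, h.2.1⟩
  tfae_have 5 → 3 := fun ⟨h1, h2⟩ =>
    ⟨h1, h2, close_op_comp 𝓕 𝓔 (relOp R) hR h2, close_op_comp 𝓔 𝓕 R hRop h1⟩
  tfae_have 5 → 4 := fun h => ⟨h.2, h.1⟩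
  tfae_have 4 → 5 := fun h => ⟨h.2, h.1⟩
  tfae_finish
end

section
/- For any relation S ⊆ Y × X and ε > 0, the following sets of operators are closed in the weak operator topology: (i) operators with support contained in S; (ii) operators with support ε-quasi-contained in S (i.e. ‖χ_B t χ_A‖ ≤ ε whenever B ∩ S(A) = ∅); (iii) operators with support ε-approximately contained in S (i.e. within norm distance ε of some operator with support contained in S). -/
/-!
All three conditions only involve the operators `χ_B t χ_A`, and `t ↦ χ_B t χ_A` is
WOT-continuous, so (i) and (ii) follow once norm balls are WOT-closed; (i) is (ii) with `ε = 0`.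
Norm balls are even WOT-compact: in the coordinates `t ↦ ((x, y) ↦ y (t x))` a ball is the set of
bilinear forms on `H_X × H_Y⋆` bounded by `C ‖x‖ ‖y‖`, a closed subset of a product of compact
discs, since every such form comes from an operator (`H_Y` is reflexive). Finally, the set in (iii)
is the sum of the WOT-closed set of operators supported in `S` and the WOT-compact `ε`-ball.
-/

open ContinuousLinearMap

/-- Image of a set under a relation: `R(A) = {y | ∃ x ∈ A, (y,x) ∈ R}`. -/
def relImage {X Y : Type*} (R : Set (Y × X)) (A : Set X) : Set Y :=
  {y | ∃ x ∈ A, (y, x) ∈ R}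

/-- A coarse geometric module for a coarse space `(X, 𝓔)`: a Hilbert space `H` together with
a nondegenerate unital representation of a unital Boolean algebra of subsets of `X` by
orthogonal projections. -/
structure CoarseModule {X : Type*} (𝓔 : CoarseStructure X) (H : Type*)
    [NormedAddCommGroup H] [InnerProductSpace ℂ H] [CompleteSpace H] where
  meas : Set (Set X)
  univ_mem : Set.univ ∈ meas
  inter_mem : ∀ {A B : Set X}, A ∈ meas → B ∈ meas → A ∩ B ∈ meas
  compl_mem : ∀ {A : Set X}, A ∈ meas → Aᶜ ∈ meas
  proj : Set X → H →L[ℂ] H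
  proj_idem : ∀ A ∈ meas, IsIdempotentElem (proj A)
  proj_sa : ∀ A ∈ meas, IsSelfAdjoint (proj A)
  proj_inter : ∀ A ∈ meas, ∀ B ∈ meas, proj (A ∩ B) = (proj A).comp (proj B)
  proj_union : ∀ A ∈ meas, ∀ B ∈ meas, A ∩ B = ∅ → proj (A ∪ B) = proj A + proj B
  proj_univ : proj Set.univ = 1
  nondegenerate : ∃ E ∈ 𝓔.ents, relOp E = E ∧ {p : X × X | p.1 = p.2} ⊆ E ∧
    (Submodule.span ℂ {v : H | ∃ A ∈ meas, A ×ˢ A ⊆ E ∧ v ∈ Set.range (proj A)}).topologicalClosure = ⊤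

variable {X Y : Type*} {𝓔 : CoarseStructure X} {𝓕 : CoarseStructure Y}
  {HX HY : Type*}
  [NormedAddCommGroup HX] [InnerProductSpace ℂ HX] [CompleteSpace HX]
  [NormedAddCommGroup HY] [InnerProductSpace ℂ HY] [CompleteSpace HY]

/-- The support of an operator `t : H_X → H_Y` is contained in `S ⊆ Y × X` if
`χ_B ∘ t ∘ χ_A = 0` for all measurable `A ⊆ X`, `B ⊆ Y` with `B ∩ S(A) = ∅`. -/
def SuppIn (MX : CoarseModule 𝓔 HX) (MY : CoarseModule 𝓕 HY)
    (t : HX →L[ℂ] HY) (S : Set (Y × X)) : Prop :=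
  ∀ A ∈ MX.meas, ∀ B ∈ MY.meas, B ∩ relImage S A = ∅ →
    (MY.proj B).comp (t.comp (MX.proj A)) = 0

/-- The support of `t` is `ε`-quasi-contained in `S`: `‖χ_B t χ_A‖ ≤ ε` whenever
`B ∩ S(A) = ∅` for measurable `A, B`. -/
def SuppQuasiIn (MX : CoarseModule 𝓔 HX) (MY : CoarseModule 𝓕 HY)
    (t : HX →L[ℂ] HY) (ε : ℝ) (S : Set (Y × X)) : Prop :=
  ∀ A ∈ MX.meas, ∀ B ∈ MY.meas, B ∩ relImage S A = ∅ →
    ‖(MY.proj B).comp (t.comp (MX.proj A))‖ ≤ ε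

/-- The support of `t` is `ε`-approximately contained in `S`: `t` is within norm distance
`ε` of some operator with support contained in `S`. -/
def SuppApproxIn (MX : CoarseModule 𝓔 HX) (MY : CoarseModule 𝓕 HY)
    (t : HX →L[ℂ] HY) (ε : ℝ) (S : Set (Y × X)) : Prop :=
  ∃ s : HX →L[ℂ] HY, SuppIn MX MY s S ∧ ‖t - s‖ ≤ ε

theorem LinearMap.isClosed_range_uncurry {R M N P : Type*} [CommSemiring R] [AddCommMonoid M]
    [AddCommMonoid N] [AddCommMonoid P] [Module R M] [Module R N] [Module R P] [TopologicalSpace P]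
    [T2Space P] [ContinuousAdd P] [ContinuousConstSMul R P] :
    IsClosed (Set.range fun (B : M →ₗ[R] N →ₗ[R] P) (p : M × N) => B p.1 p.2) := by
  have hrange : (Set.range fun (B : M →ₗ[R] N →ₗ[R] P) (p : M × N) => B p.1 p.2) =
      {f | (∀ x x' y, f (x + x', y) = f (x, y) + f (x', y)) ∧
        (∀ (c : R) x y, f (c • x, y) = c • f (x, y)) ∧
        (∀ x y y', f (x, y + y') = f (x, y) + f (x, y')) ∧
        (∀ (c : R) x y, f (x, c • y) = c • f (x, y))} := by
    ext f
    constructor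
    · rintro ⟨B, rfl⟩
      simp
    · rintro ⟨h₁, h₂, h₃, h₄⟩
      exact ⟨LinearMap.mk₂ R (fun x y => f (x, y)) h₁ h₂ h₃ h₄, rfl⟩
  rw [hrange]
  simp only [Set.ofPred_and, Set.ofPred_forall]
  repeat' first | refine IsClosed.inter ?_ ?_ | refine isClosed_iInter fun _ => ?_
  all_goals exact isClosed_eq (by fun_prop) (by fun_prop)

section

variable {𝕜 D E F H : Type*} [RCLike 𝕜] [NormedAddCommGroup D] [NormedSpace 𝕜 D]
  [NormedAddCommGroup E] [NormedSpace 𝕜 E] [NormedAddCommGroup F] [NormedSpace 𝕜 F]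
  [NormedAddCommGroup H] [InnerProductSpace 𝕜 H] [CompleteSpace H]

theorem InnerProductSpace.inclusionInDoubleDual_surjective :
    Function.Surjective (NormedSpace.inclusionInDoubleDual 𝕜 H) := by
  intro φ
  -- `ψ w = conj (φ (toDual w))`, whose Riesz vector represents `φ`
  let ψ : StrongDual 𝕜 H :=
    (starL 𝕜 : 𝕜 ≃L⋆[𝕜] 𝕜).toContinuousLinearMap.comp
      (φ.comp (InnerProductSpace.toDual 𝕜 H).toContinuousLinearEquiv.toContinuousLinearMap)
  refine ⟨(InnerProductSpace.toDual 𝕜 H).symm ψ, ?_⟩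
  ext y
  obtain ⟨w, rfl⟩ := (InnerProductSpace.toDual 𝕜 H).surjective y
  rw [NormedSpace.dual_def, InnerProductSpace.toDual_apply_apply, ← inner_conj_symm,
    ← InnerProductSpace.toDual_apply_apply, LinearIsometryEquiv.apply_symm_apply]
  simp [ψ]

theorem LinearMap.exists_opNorm_le_dual_apply_eq
    (B : E →ₗ[𝕜] StrongDual 𝕜 H →ₗ[𝕜] 𝕜) {C : ℝ} (hC : 0 ≤ C)
    (hB : ∀ x y, ‖B x y‖ ≤ C * ‖x‖ * ‖y‖) :
    ∃ t : E →L[𝕜] H, ‖t‖ ≤ C ∧ ∀ x y, y (t x) = B x y := by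
  let J := LinearIsometryEquiv.ofSurjective
    (NormedSpace.inclusionInDoubleDualLi (E := H) 𝕜)
    InnerProductSpace.inclusionInDoubleDual_surjective
  refine ⟨J.symm.toLinearIsometry.toContinuousLinearMap.comp (B.mkContinuous₂ C hB), ?_,
    fun x y => ?_⟩
  · refine opNorm_le_bound _ hC fun x => ?_
    calc ‖J.symm (B.mkContinuous₂ C hB x)‖ = ‖B.mkContinuous₂ C hB x‖ := J.symm.norm_map _
      _ ≤ C * ‖x‖ := (B.mkContinuous₂ C hB).le_of_opNorm_le (B.mkContinuous₂_norm_le hC hB) x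
  · exact congr($(J.apply_symm_apply (B.mkContinuous₂ C hB x)) y)

namespace ContinuousLinearMapWOT

theorem image_inducingFn_setOf_norm_le {C : ℝ} (hC : 0 ≤ C) :
    inducingFn (RingHom.id 𝕜) E H '' {t | ‖toCLM t‖ ≤ C} =
      (Set.univ.pi fun p => Metric.closedBall 0 (C * ‖p.1‖ * ‖p.2‖)) ∩
        Set.range fun (B : E →ₗ[𝕜] StrongDual 𝕜 H →ₗ[𝕜] 𝕜) p => B p.1 p.2 := by
  ext f
  constructor
  · rintro ⟨t, ht, rfl⟩
    refine ⟨fun p _ => ?_, ⟨(coeLM 𝕜).comp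
      ((NormedSpace.inclusionInDoubleDual 𝕜 H).comp (toCLM t)).toLinearMap, rfl⟩⟩
    rw [mem_closedBall_zero_iff, inducingFn_apply]
    calc ‖p.2 (t p.1)‖ ≤ ‖p.2‖ * ‖toCLM t p.1‖ := p.2.le_opNorm _
      _ ≤ ‖p.2‖ * (C * ‖p.1‖) := by gcongr; exact (toCLM t).le_of_opNorm_le ht _
      _ = C * ‖p.1‖ * ‖p.2‖ := by ring
  · rintro ⟨hf, B, rfl⟩
    have hB : ∀ x y, ‖B x y‖ ≤ C * ‖x‖ * ‖y‖ := fun x y => by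
      simpa using hf (x, y) (Set.mem_univ _)
    obtain ⟨t, ht, htB⟩ := LinearMap.exists_opNorm_le_dual_apply_eq B hC hB
    exact ⟨ofCLM t, ht, funext fun p => htB p.1 p.2⟩

theorem isCompact_setOf_norm_le (C : ℝ) : IsCompact {t : E →WOT[𝕜] H | ‖toCLM t‖ ≤ C} := by
  rcases lt_or_ge C 0 with hC | hC
  · convert isCompact_empty
    exact Set.eq_empty_of_forall_notMem fun t ht => (hC.trans_le (norm_nonneg _)).not_ge ht
  rw [isEmbedding_inducingFn.isCompact_iff, image_inducingFn_setOf_norm_le hC]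
  exact (isCompact_univ_pi fun _ => isCompact_closedBall _ _).inter_right
    LinearMap.isClosed_range_uncurry

theorem isClosed_setOf_norm_comp_comp_le (P : F →L[𝕜] H) (Q : D →L[𝕜] E) (C : ℝ) :
    IsClosed {t : E →WOT[𝕜] F | ‖P.comp ((toCLM t).comp Q)‖ ≤ C} :=
  (isCompact_setOf_norm_le C).isClosed.preimage
    ((continuous_postcomp (ofCLM P)).comp (continuous_precomp (ofCLM Q)))

end ContinuousLinearMapWOT

end

open ContinuousLinearMapWOT Pointwise

theorem suppIn_iff_suppQuasiIn_zero (MX : CoarseModule 𝓔 HX) (MY : CoarseModule 𝓕 HY)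
    (t : HX →L[ℂ] HY) (S : Set (Y × X)) : SuppIn MX MY t S ↔ SuppQuasiIn MX MY t 0 S := by
  simp only [SuppIn, SuppQuasiIn, norm_le_zero_iff]

theorem isClosed_setOf_suppQuasiIn (MX : CoarseModule 𝓔 HX) (MY : CoarseModule 𝓕 HY)
    (ε : ℝ) (S : Set (Y × X)) :
    IsClosed {t : HX →WOT[ℂ] HY | SuppQuasiIn MX MY (toCLM t) ε S} := by
  simp only [SuppQuasiIn, Set.ofPred_forall]
  exact isClosed_biInter fun A _ => isClosed_biInter fun B _ => isClosed_iInter fun _ =>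
    isClosed_setOf_norm_comp_comp_le _ _ _

theorem setOf_suppApproxIn_eq_add (MX : CoarseModule 𝓔 HX) (MY : CoarseModule 𝓕 HY)
    (ε : ℝ) (S : Set (Y × X)) :
    {t : HX →WOT[ℂ] HY | SuppApproxIn MX MY (toCLM t) ε S} =
      {t | SuppIn MX MY (toCLM t) S} + {t : HX →WOT[ℂ] HY | ‖toCLM t‖ ≤ ε} := by
  ext t
  constructor
  · rintro ⟨s, hs, hts⟩
    exact ⟨ofCLM s, hs, t - ofCLM s, hts, add_sub_cancel _ _⟩
  · rintro ⟨a, ha, b, hb, rfl⟩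
    exact ⟨toCLM a, ha, by simpa using hb⟩

theorem stmt12_general (MX : CoarseModule 𝓔 HX) (MY : CoarseModule 𝓕 HY)
    (S : Set (Y × X)) (ε : ℝ) :
    IsClosed {t : HX →WOT[ℂ] HY |
        SuppIn MX MY (ContinuousLinearMapWOT.toCLM t) S} ∧
    IsClosed {t : HX →WOT[ℂ] HY |
        SuppQuasiIn MX MY (ContinuousLinearMapWOT.toCLM t) ε S} ∧
    IsClosed {t : HX →WOT[ℂ] HY |
        SuppApproxIn MX MY (ContinuousLinearMapWOT.toCLM t) ε S} := by
  have hSuppIn : IsClosed {t : HX →WOT[ℂ] HY | SuppIn MX MY (toCLM t) S} := by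
    simpa only [suppIn_iff_suppQuasiIn_zero] using isClosed_setOf_suppQuasiIn MX MY 0 S
  refine ⟨hSuppIn, isClosed_setOf_suppQuasiIn MX MY ε S, ?_⟩
  rw [setOf_suppApproxIn_eq_add]
  exact hSuppIn.add_right_of_isCompact (isCompact_setOf_norm_le ε)

/-- For any relation `S ⊆ Y × X` and `ε > 0`, the following sets of operators are closed in
the weak operator topology: (i) operators with support contained in `S`; (ii) operators with
support `ε`-quasi-contained in `S`; (iii) operators with support `ε`-approximately contained
in `S`. -/
theorem stmt12 (MX : CoarseModule 𝓔 HX) (MY : CoarseModule 𝓕 HY)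
    (S : Set (Y × X)) (ε : ℝ) (hε : 0 < ε) :
    IsClosed {t : HX →WOT[ℂ] HY |
        SuppIn MX MY (ContinuousLinearMapWOT.toCLM t) S} ∧
    IsClosed {t : HX →WOT[ℂ] HY |
        SuppQuasiIn MX MY (ContinuousLinearMapWOT.toCLM t) ε S} ∧
    IsClosed {t : HX →WOT[ℂ] HY |
        SuppApproxIn MX MY (ContinuousLinearMapWOT.toCLM t) ε S} :=
  stmt12_general MX MY S ε
end

section
/- Let (Fₙ) be a nested cofinal sequence of entourages in the coarse structure of Y, ε > 0, and let (tₙ) be a family of pairwise orthogonal contractions on H_Y such that tₙ is not ε-Fₙ-quasi-local for every n. Then there exists K ⊆ ℕ such that the SOT-sum Σ_{k∈K} t_k is not quasi-local. -/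
open ContinuousLinearMap

variable {X Y : Type*} {𝓔 : CoarseStructure X} {𝓕 : CoarseStructure Y}
  {HX HY : Type*}
  [NormedAddCommGroup HX] [InnerProductSpace ℂ HX] [CompleteSpace HX]
  [NormedAddCommGroup HY] [InnerProductSpace ℂ HY] [CompleteSpace HY]

/-- An operator `t` on `H_Y` is `ε`-`F`-quasi-local if `‖χ_{A'} t χ_A‖ ≤ ε` for all
measurable `A, A'` with `A' ∩ F(A) = ∅`. -/
def IsQuasiLocalWith (M : CoarseModule 𝓕 HY) (t : HY →L[ℂ] HY) (ε : ℝ)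
    (F : Set (Y × Y)) : Prop :=
  ∀ A ∈ M.meas, ∀ A' ∈ M.meas, A' ∩ relImage F A = ∅ →
    ‖(M.proj A').comp (t.comp (M.proj A))‖ ≤ ε

/-- `t` is quasi-local if for every `ε > 0` there is an entourage `F` with `t`
`ε`-`F`-quasi-local. -/
def IsQuasiLocal (M : CoarseModule 𝓕 HY) (t : HY →L[ℂ] HY) : Prop :=
  ∀ ε : ℝ, 0 < ε → ∃ F ∈ 𝓕.ents, IsQuasiLocalWith M t ε F

/-! Suppose every subsum `s_K = Σ_{k ∈ K} t_k` is quasi-local. Identify `𝒫(ℕ)` with the Cantor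
space `ℕ → Bool`. Since `(t_k v)_k` is unconditionally summable, `K ↦ s_K v` is continuous, so the
sets `C_n` of those `K` for which `s_K` is `ε/2`-`F_n`-quasi-local are closed, and by cofinality
they cover `𝒫(ℕ)`. By Baire some `C_n` has interior, and an open set constrains only finitely many
coordinates: for some `m ≥ n` both `K` and `insert m K` lie in `C_n`, with `m ∉ K`. Then
`t_m = s_{insert m K} - s_K` is `ε`-`F_n`-, hence `ε`-`F_m`-quasi-local, a contradiction. -/

open Filter Topology

section SubfamilySums

variable {ι E : Type*} [NormedAddCommGroup E] {f : ι → E}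

theorem HasSum.sub_sum_indicator_eq_tsum {B : Set ι} {a : E} (h : HasSum (B.indicator f) a)
    (s : Finset ι) : a - ∑ i ∈ s, B.indicator f i = ∑' i : ↥((↑s)ᶜ ∩ B), f i := by
  rw [← h.tsum_eq, ← h.summable.sum_add_tsum_compl (s := s), add_sub_cancel_left, tsum_subtype,
    tsum_subtype, Set.indicator_indicator]

theorem continuous_of_hasSum_subtype {g : Set ι → E}
    (hg : ∀ K : Set ι, HasSum (fun i : K => f i) (g K)) :
    Continuous fun b : ι → Bool => g {i | b i} := by
  have hf : Summable f := by
    simpa using (hasSum_subtype_iff_indicator.1 (hg Set.univ)).summable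
  -- the finite partial sums converge uniformly in `b`, by the Cauchy criterion for `f`
  refine TendstoUniformly.continuous (p := atTop)
    (F := fun (s : Finset ι) b => ∑ i ∈ s, {i | b i}.indicator f i) ?_
    (Frequently.of_forall fun s => continuous_finsetSum s fun i _ => ?_)
  · rw [Metric.tendstoUniformly_iff]
    intro δ hδ
    obtain ⟨S, hS⟩ := hf.tsum_vanishing (Metric.ball_mem_nhds 0 hδ)
    filter_upwards [eventually_ge_atTop S] with s hs b
    rw [dist_eq_norm, (hasSum_subtype_iff_indicator.1 (hg _)).sub_sum_indicator_eq_tsum,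
      ← mem_ball_zero_iff]
    exact hS _ (Set.disjoint_left.2 fun i hi hiS => hi.1 (hs hiS))
  · refine (continuous_of_discreteTopology.comp (continuous_apply i)
      (g := fun c : Bool => if c then f i else 0)).congr fun b => ?_
    simp [Set.indicator_apply]

theorem hasSum_subtype_insert {m : ι} {K : Set ι} {a : E} (hm : m ∉ K)
    (h : HasSum (fun i : K => f i) a) : HasSum (fun i : ↥(insert m K) => f i) (f m + a) :=
  (hasSum_singleton m f).add_disjoint (Set.disjoint_singleton_left.2 hm) h

end SubfamilySums

theorem tendsto_update_cofinite {ι β : Type*} [DecidableEq ι] [TopologicalSpace β] (b : ι → β)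
    (c : β) : Tendsto (fun i => Function.update b i c) cofinite (𝓝 b) := by
  refine tendsto_pi_nhds.2 fun j => tendsto_const_nhds.congr' ?_
  filter_upwards [eventually_cofinite_ne j] with i hi
  rw [Function.update_of_ne hi.symm]

theorem exists_ge_update_mem {β : Type*} [TopologicalSpace β] {U : Set (ℕ → β)} {b : ℕ → β}
    (hU : U ∈ 𝓝 b) (n : ℕ) (c c' : β) :
    ∃ m ≥ n, Function.update b m c ∈ U ∧ Function.update b m c' ∈ U := by
  have hupdate (c : β) : ∀ᶠ m in atTop, Function.update b m c ∈ U := by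
    rw [← Nat.cofinite_eq_atTop]
    exact tendsto_update_cofinite b c hU
  exact ((eventually_ge_atTop n).and ((hupdate c).and (hupdate c'))).exists

theorem setOf_update_true {ι : Type*} [DecidableEq ι] (b : ι → Bool) (m : ι) :
    {i | Function.update b m true i} = insert m {i | Function.update b m false i} := by
  ext i
  by_cases hi : i = m <;> simp [hi]

theorem relImage_mono {R R' : Set (Y × X)} (h : R ⊆ R') (A : Set X) :
    relImage R A ⊆ relImage R' A :=
  fun _ ⟨x, hx, hyx⟩ => ⟨x, hx, h hyx⟩

section QuasiLocal

variable {M : CoarseModule 𝓕 HY} {t t₁ t₂ : HY →L[ℂ] HY} {ε ε₁ ε₂ : ℝ} {F F' : Set (Y × Y)}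

theorem IsQuasiLocalWith.mono (hF : F ⊆ F') (ht : IsQuasiLocalWith M t ε F) :
    IsQuasiLocalWith M t ε F' := fun A hA A' hA' h =>
  ht A hA A' hA' <| Set.subset_empty_iff.1 <|
    h ▸ Set.inter_subset_inter_right _ (relImage_mono hF A)

theorem IsQuasiLocalWith.sub (h₁ : IsQuasiLocalWith M t₁ ε₁ F) (h₂ : IsQuasiLocalWith M t₂ ε₂ F) :
    IsQuasiLocalWith M (t₁ - t₂) (ε₁ + ε₂) F := fun A hA A' hA' h => by
  rw [sub_comp, comp_sub]
  exact (norm_sub_le _ _).trans (add_le_add (h₁ A hA A' hA' h) (h₂ A hA A' hA' h))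

theorem IsQuasiLocal.exists_isQuasiLocalWith {F : ℕ → Set (Y × Y)}
    (hF : ∀ E ∈ 𝓕.ents, ∃ n, E ⊆ F n) (ht : IsQuasiLocal M t) (hε : 0 < ε) :
    ∃ n, IsQuasiLocalWith M t ε (F n) := by
  obtain ⟨E, hE, htE⟩ := ht ε hε
  obtain ⟨n, hn⟩ := hF E hE
  exact ⟨n, htE.mono hn⟩

theorem isQuasiLocalWith_iff_forall_norm_le (hε : 0 ≤ ε) :
    IsQuasiLocalWith M t ε F ↔ ∀ A ∈ M.meas, ∀ A' ∈ M.meas, A' ∩ relImage F A = ∅ →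
      ∀ v, ‖M.proj A' (t (M.proj A v))‖ ≤ ε * ‖v‖ := by
  simp only [IsQuasiLocalWith, opNorm_le_iff hε, comp_apply]

theorem isClosed_setOf_isQuasiLocalWith {α : Type*} [TopologicalSpace α] {s : α → HY →L[ℂ] HY}
    (hs : ∀ v, Continuous fun a => s a v) (hε : 0 ≤ ε) :
    IsClosed {a | IsQuasiLocalWith M (s a) ε F} := by
  simp only [isQuasiLocalWith_iff_forall_norm_le hε, Set.ofPred_forall]
  refine isClosed_iInter fun A => isClosed_iInter fun _ => isClosed_iInter fun A' =>
    isClosed_iInter fun _ => isClosed_iInter fun _ => isClosed_iInter fun v => ?_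
  exact isClosed_le ((M.proj A').continuous.comp (hs _)).norm continuous_const

end QuasiLocal

theorem stmt13_general (M : CoarseModule 𝓕 HY)
    (F : ℕ → Set (Y × Y))
    (hFnested : ∀ n, F n ⊆ F (n + 1))
    (hFcofinal : ∀ E ∈ 𝓕.ents, ∃ n, E ⊆ F n)
    (ε : ℝ) (hε : 0 < ε)
    (t : ℕ → (HY →L[ℂ] HY))
    (hnql : ∀ n, ¬ IsQuasiLocalWith M (t n) ε (F n)) :
    ∃ K : Set ℕ, ∀ s : HY →L[ℂ] HY,
      (∀ v : HY, HasSum (fun k : K => t k v) (s v)) → ¬ IsQuasiLocal M s := by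
  by_contra! h
  choose s hsum hql using h
  let C n : Set (ℕ → Bool) := {b | IsQuasiLocalWith M (s {k | b k}) (ε / 2) (F n)}
  have hC : ⋃ n, C n = Set.univ := Set.eq_univ_of_forall fun b =>
    Set.mem_iUnion.2 ((hql _).exists_isQuasiLocalWith hFcofinal (half_pos hε))
  obtain ⟨n, b, hb⟩ := nonempty_interior_of_iUnion_of_closed (fun n =>
    isClosed_setOf_isQuasiLocalWith (fun v =>
      continuous_of_hasSum_subtype (f := (t · v)) (fun K => hsum K v)) (half_pos hε).le) hC
  obtain ⟨m, hnm, hfalse, htrue⟩ :=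
    exists_ge_update_mem (mem_interior_iff_mem_nhds.1 hb) n false true
  have hdiff : s {k | Function.update b m true k} - s {k | Function.update b m false k} = t m := by
    ext v
    have hins := hasSum_subtype_insert (f := (t · v))
      (by simp : m ∉ {k | Function.update b m false k}) (hsum _ v)
    rw [sub_apply, setOf_update_true, (hsum _ v).unique hins, add_sub_cancel_right]
  apply hnql m
  have htm := (htrue.sub hfalse).mono (monotone_nat_of_le_succ hFnested hnm)
  rwa [hdiff, add_halves] at htm

/-- Let `(Fₙ)` be a nested cofinal sequence of entourages of `Y`, `ε > 0`, and `(tₙ)` a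
family of pairwise orthogonal contractions on `H_Y` such that `tₙ` is not
`ε`-`Fₙ`-quasi-local for every `n`.  Then there is `K ⊆ ℕ` such that the SOT-sum
`Σ_{k∈K} t_k` is not quasi-local. -/
theorem stmt13 (M : CoarseModule 𝓕 HY)
    (F : ℕ → Set (Y × Y)) (hFmem : ∀ n, F n ∈ 𝓕.ents)
    (hFnested : ∀ n, F n ⊆ F (n + 1))
    (hFcofinal : ∀ E ∈ 𝓕.ents, ∃ n, E ⊆ F n)
    (ε : ℝ) (hε : 0 < ε)
    (t : ℕ → (HY →L[ℂ] HY)) (hcontr : ∀ n, ‖t n‖ ≤ 1)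
    (horth : ∀ m n, m ≠ n →
      (t m).comp (ContinuousLinearMap.adjoint (t n)) = 0 ∧
      (ContinuousLinearMap.adjoint (t m)).comp (t n) = 0)
    (hnql : ∀ n, ¬ IsQuasiLocalWith M (t n) ε (F n)) :
    ∃ K : Set ℕ, ∀ s : HY →L[ℂ] HY,
      (∀ v : HY, HasSum (fun k : K => t k v) (s v)) → ¬ IsQuasiLocal M s :=
  stmt13_general M F hFnested hFcofinal ε hε t hnql
end

section
/- Let X be coarsely connected with module H_X, B ⊆ Y measurable, and H ≤ χ_B(H_Y) a finite-dimensional subspace. Suppose ε > 0 is such that for every bounded measurable A ⊆ X there is a unit vector w ∈ χ_B(H_Y) with ‖(1 − χ_A) T* w‖ > ε. Then for every bounded measurable A there exists a unit vector w̄ ∈ χ_B(H_Y) ∩ H^⊥ with ‖(1 − χ_A) T* w̄‖ > ε/2. -/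
open ContinuousLinearMap

variable {X Y : Type*} {𝓔 : CoarseStructure X} {𝓕 : CoarseStructure Y}
  {HX HY : Type*}
  [NormedAddCommGroup HX] [InnerProductSpace ℂ HX] [CompleteSpace HX]
  [NormedAddCommGroup HY] [InnerProductSpace ℂ HY] [CompleteSpace HY]

/-- A subset of a coarse space is bounded if it is `E`-bounded for some entourage `E`. -/
def IsBoundedSet {Z : Type*} (𝓖 : CoarseStructure Z) (A : Set Z) : Prop :=
  ∃ E ∈ 𝓖.ents, A ×ˢ A ⊆ E

/-! Enlarge `A` to a bounded measurable `A'` on which `(1 - χ_{A'}) T*` is uniformly `ε/2`-small on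
the finite-dimensional `K`: the projections `χ_{A'}` converge strongly to `1`, and a finite
orthonormal basis of `K` turns strong convergence into uniform convergence on its unit ball.
Take `w` from the hypothesis at `A'` and remove its component in `K`; this costs at most `ε/2`
in `‖(1 - χ_{A'}) T* w‖`, does not increase `‖w‖`, and shrinking `A'` back to `A` only
increases the norm, so normalising gives the required `w̄`. -/

theorem OrthonormalBasis.norm_apply_le_sum_mul_norm {𝕜 ι E F : Type*} [RCLike 𝕜] [Fintype ι]
    [NormedAddCommGroup E] [InnerProductSpace 𝕜 E] [SeminormedAddCommGroup F] [NormedSpace 𝕜 F]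
    (b : OrthonormalBasis ι 𝕜 E) (L : E →L[𝕜] F) (v : E) :
    ‖L v‖ ≤ (∑ i, ‖L (b i)‖) * ‖v‖ := by
  conv_lhs => rw [← b.sum_repr' v]
  rw [map_sum, Finset.sum_mul]
  refine (norm_sum_le _ _).trans (Finset.sum_le_sum fun i _ => ?_)
  rw [map_smul, norm_smul, mul_comm]
  refine mul_le_mul_of_nonneg_left ?_ (norm_nonneg _)
  simpa [b.orthonormal.1 i] using norm_inner_le_norm (𝕜 := 𝕜) (b i) v

theorem lt_norm_apply_smul_inv_norm {𝕜 E F : Type*} [RCLike 𝕜] [NormedAddCommGroup E]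
    [NormedSpace 𝕜 E] [SeminormedAddCommGroup F] [NormedSpace 𝕜 F] (L : E →L[𝕜] F) {w : E}
    (hw : ‖w‖ ≤ 1) {c : ℝ} (hc : 0 ≤ c) (h : c < ‖L w‖) :
    c < ‖L ((‖w‖⁻¹ : 𝕜) • w)‖ := by
  have hw0 : 0 < ‖w‖ := norm_pos_iff.mpr fun hw0 => by simp [hw0] at h; linarith
  rw [map_smul, norm_smul, norm_inv, RCLike.norm_ofReal, abs_norm]
  exact h.trans_le (le_mul_of_one_le_left (norm_nonneg _) (one_le_inv₀ hw0 |>.mpr hw))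

theorem IsBoundedSet.union (hconn : ∀ s : Set X, s.Finite → IsBoundedSet 𝓔 s)
    {A B : Set X} (hA : IsBoundedSet 𝓔 A) (hB : IsBoundedSet 𝓔 B) : IsBoundedSet 𝓔 (A ∪ B) := by
  rcases A.eq_empty_or_nonempty with rfl | ⟨a, ha⟩
  · simpa using hB
  rcases B.eq_empty_or_nonempty with rfl | ⟨b, hb⟩
  · simpa using hA
  obtain ⟨E, hE, hAE⟩ := hA
  obtain ⟨F, hF, hBF⟩ := hB
  obtain ⟨G, hG, habG⟩ := hconn {a, b} (Set.toFinite _)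
  -- `x ∈ A` and `y ∈ B` are joined through `a` and `b`
  set C := relComp E (relComp G F)
  have hAB : A ×ˢ B ⊆ C := fun p hp =>
    ⟨a, hAE ⟨hp.1, ha⟩, b, habG ⟨by simp, by simp⟩, hBF ⟨hb, hp.2⟩⟩
  have hC : C ∈ 𝓔.ents := 𝓔.comp_mem hE (𝓔.comp_mem hG hF)
  refine ⟨E ∪ F ∪ C ∪ relOp C,
    𝓔.union_mem (𝓔.union_mem (𝓔.union_mem hE hF) hC) (𝓔.op_mem hC), ?_⟩
  rintro ⟨x, y⟩ ⟨hx | hx, hy | hy⟩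
  · exact Or.inl (Or.inl (Or.inl (hAE ⟨hx, hy⟩)))
  · exact Or.inl (Or.inr (hAB ⟨hx, hy⟩))
  · exact Or.inr (hAB ⟨hy, hx⟩)
  · exact Or.inl (Or.inl (Or.inr (hBF ⟨hx, hy⟩)))

namespace CoarseModule

variable (M : CoarseModule 𝓔 HX)

theorem empty_mem : ∅ ∈ M.meas := by
  simpa using M.compl_mem M.univ_mem

theorem union_mem {A B : Set X} (hA : A ∈ M.meas) (hB : B ∈ M.meas) : A ∪ B ∈ M.meas := by
  simpa [Set.compl_inter] using M.compl_mem (M.inter_mem (M.compl_mem hA) (M.compl_mem hB))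

theorem proj_proj_apply {A : Set X} (hA : A ∈ M.meas) (v : HX) :
    M.proj A (M.proj A v) = M.proj A v :=
  congrArg (fun P => P v) (M.proj_idem A hA).eq

theorem proj_apply_eq_self_of_subset {A A' : Set X} (hA : A ∈ M.meas) (hA' : A' ∈ M.meas)
    (hAA' : A ⊆ A') {v : HX} (hv : M.proj A v = v) : M.proj A' v = v := by
  rw [← hv, ← ContinuousLinearMap.comp_apply, ← M.proj_inter A' hA' A hA,
    Set.inter_eq_right.mpr hAA']

theorem norm_one_sub_proj_apply_le {A : Set X} (hA : A ∈ M.meas) (v : HX) :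
    ‖(1 - M.proj A) v‖ ≤ ‖v‖ :=
  (le_opNorm _ _).trans <| mul_le_of_le_one_left (norm_nonneg v) <|
    IsStarProjection.norm_le _ (IsStarProjection.one_sub ⟨M.proj_idem A hA, M.proj_sa A hA⟩)

theorem norm_one_sub_proj_apply_le_of_subset {A A' : Set X} (hA : A ∈ M.meas)
    (hA' : A' ∈ M.meas) (hAA' : A ⊆ A') (v : HX) :
    ‖(1 - M.proj A') v‖ ≤ ‖(1 - M.proj A) v‖ := by
  have hPA : (1 - M.proj A') (M.proj A v) = 0 := by
    simp [M.proj_apply_eq_self_of_subset hA hA' hAA' (M.proj_proj_apply hA v)]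
  calc ‖(1 - M.proj A') v‖ = ‖(1 - M.proj A') ((1 - M.proj A) v)‖ := by
        rw [sub_apply 1 (M.proj A) v, one_apply_eq_self, map_sub, hPA, sub_zero]
    _ ≤ ‖(1 - M.proj A) v‖ := M.norm_one_sub_proj_apply_le hA' _

theorem exists_isBoundedSet_proj_apply_eq_self_of_mem_span
    (hconn : ∀ s : Set X, s.Finite → IsBoundedSet 𝓔 s) {E : Set (X × X)} (hE : E ∈ 𝓔.ents)
    {v : HX} (hv : v ∈ Submodule.span ℂ
      {v : HX | ∃ A ∈ M.meas, A ×ˢ A ⊆ E ∧ v ∈ Set.range (M.proj A)}) :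
    ∃ A ∈ M.meas, IsBoundedSet 𝓔 A ∧ M.proj A v = v := by
  induction hv using Submodule.span_induction with
  | mem w hw =>
    obtain ⟨A, hA, hAE, u, rfl⟩ := hw
    exact ⟨A, hA, ⟨E, hE, hAE⟩, M.proj_proj_apply hA u⟩
  | zero => exact ⟨∅, M.empty_mem, ⟨_, 𝓔.diag_mem, by simp⟩, map_zero _⟩
  | add v w _ _ ihv ihw =>
    obtain ⟨Av, hAv, hAvb, hv⟩ := ihv
    obtain ⟨Aw, hAw, hAwb, hw⟩ := ihw
    have hAvw := M.union_mem hAv hAw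
    refine ⟨Av ∪ Aw, hAvw, hAvb.union hconn hAwb, ?_⟩
    rw [map_add, M.proj_apply_eq_self_of_subset hAv hAvw Set.subset_union_left hv,
      M.proj_apply_eq_self_of_subset hAw hAvw Set.subset_union_right hw]
  | smul c v _ ih =>
    obtain ⟨A, hA, hAb, hv⟩ := ih
    exact ⟨A, hA, hAb, by rw [map_smul, hv]⟩

theorem exists_isBoundedSet_norm_one_sub_proj_apply_lt
    (hconn : ∀ s : Set X, s.Finite → IsBoundedSet 𝓔 s) (x : HX) {δ : ℝ} (hδ : 0 < δ) :
    ∃ A ∈ M.meas, IsBoundedSet 𝓔 A ∧ ‖(1 - M.proj A) x‖ < δ := by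
  obtain ⟨E, hE, -, -, hdense⟩ := M.nondegenerate
  have hx : x ∈ closure (Submodule.span ℂ
      {v : HX | ∃ A ∈ M.meas, A ×ˢ A ⊆ E ∧ v ∈ Set.range (M.proj A)} : Set HX) := by
    rw [← Submodule.topologicalClosure_coe, hdense]
    trivial
  obtain ⟨v, hv, hxv⟩ := Metric.mem_closure_iff.mp hx δ hδ
  obtain ⟨A, hA, hAb, hvA⟩ := M.exists_isBoundedSet_proj_apply_eq_self_of_mem_span hconn hE hv
  refine ⟨A, hA, hAb, ?_⟩
  calc ‖(1 - M.proj A) x‖ = ‖(1 - M.proj A) (x - v)‖ := by simp [hvA]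
    _ ≤ ‖x - v‖ := M.norm_one_sub_proj_apply_le hA _
    _ < δ := by rwa [← dist_eq_norm]

theorem exists_superset_sum_norm_one_sub_proj_apply_lt
    (hconn : ∀ s : Set X, s.Finite → IsBoundedSet 𝓔 s) {ι : Type*} (s : Finset ι) (f : ι → HX)
    {A : Set X} (hA : A ∈ M.meas) (hAb : IsBoundedSet 𝓔 A) {δ : ℝ} (hδ : 0 < δ) :
    ∃ A' ∈ M.meas, IsBoundedSet 𝓔 A' ∧ A ⊆ A' ∧ ∑ i ∈ s, ‖(1 - M.proj A') (f i)‖ < δ := by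
  classical
  induction s using Finset.induction generalizing δ with
  | empty => exact ⟨A, hA, hAb, subset_rfl, by simpa using hδ⟩
  | insert a s has ih =>
    obtain ⟨A₁, hA₁, hA₁b, hAA₁, hs⟩ := ih (half_pos hδ)
    obtain ⟨A₂, hA₂, hA₂b, ha⟩ :=
      M.exists_isBoundedSet_norm_one_sub_proj_apply_lt hconn (f a) (half_pos hδ)
    have hA₁₂ := M.union_mem hA₁ hA₂
    refine ⟨A₁ ∪ A₂, hA₁₂, hA₁b.union hconn hA₂b, hAA₁.trans Set.subset_union_left, ?_⟩
    rw [Finset.sum_insert has]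
    have ha' := M.norm_one_sub_proj_apply_le_of_subset hA₂ hA₁₂ Set.subset_union_right (f a)
    have hs' : ∑ i ∈ s, ‖(1 - M.proj (A₁ ∪ A₂)) (f i)‖ ≤ ∑ i ∈ s, ‖(1 - M.proj A₁) (f i)‖ :=
      Finset.sum_le_sum fun i _ =>
        M.norm_one_sub_proj_apply_le_of_subset hA₁ hA₁₂ Set.subset_union_left (f i)
    linarith

theorem exists_superset_norm_one_sub_proj_comp_le
    (hconn : ∀ s : Set X, s.Finite → IsBoundedSet 𝓔 s) {E : Type*} [NormedAddCommGroup E]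
    [InnerProductSpace ℂ E] (S : E →L[ℂ] HX) (K : Submodule ℂ E) [FiniteDimensional ℂ K]
    {A : Set X} (hA : A ∈ M.meas) (hAb : IsBoundedSet 𝓔 A) {δ : ℝ} (hδ : 0 < δ) :
    ∃ A' ∈ M.meas, IsBoundedSet 𝓔 A' ∧ A ⊆ A' ∧
      ∀ v ∈ K, ‖(1 - M.proj A') (S v)‖ ≤ δ * ‖v‖ := by
  let b := stdOrthonormalBasis ℂ K
  obtain ⟨A', hA', hA'b, hAA', hsum⟩ := M.exists_superset_sum_norm_one_sub_proj_apply_lt hconn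
    Finset.univ (fun i => S (b i)) hA hAb hδ
  refine ⟨A', hA', hA'b, hAA', fun v hv => ?_⟩
  calc ‖(1 - M.proj A') (S v)‖ ≤ (∑ i, ‖(1 - M.proj A') (S (b i))‖) * ‖v‖ :=
        by simpa only [comp_apply, Submodule.subtypeL_apply, Submodule.coe_norm] using
          b.norm_apply_le_sum_mul_norm ((1 - M.proj A') ∘L S ∘L K.subtypeL) ⟨v, hv⟩
    _ ≤ δ * ‖v‖ := mul_le_mul_of_nonneg_right hsum.le (norm_nonneg v)

end CoarseModule

theorem stmt17_general (MX : CoarseModule 𝓔 HX) (MY : CoarseModule 𝓕 HY)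
    (hconn : ∀ s : Set X, s.Finite → IsBoundedSet 𝓔 s)
    (T : HX →L[ℂ] HY)
    (B : Set Y)
    (K : Submodule ℂ HY) [FiniteDimensional ℂ K]
    (hK : ∀ w ∈ K, MY.proj B w = w)
    (ε : ℝ) (hε : 0 < ε)
    (hyp : ∀ A ∈ MX.meas, IsBoundedSet 𝓔 A →
      ∃ w : HY, ‖w‖ = 1 ∧ MY.proj B w = w ∧
        ε < ‖(1 - MX.proj A) ((ContinuousLinearMap.adjoint T) w)‖) :
    ∀ A ∈ MX.meas, IsBoundedSet 𝓔 A →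
      ∃ w : HY, ‖w‖ = 1 ∧ MY.proj B w = w ∧ (∀ u ∈ K, inner (𝕜 := ℂ) u w = 0) ∧
        ε / 2 < ‖(1 - MX.proj A) ((ContinuousLinearMap.adjoint T) w)‖ := by
  intro A hA hAb
  obtain ⟨A', hA', hA'b, hAA', hsmall⟩ := MX.exists_superset_norm_one_sub_proj_comp_le hconn
    (adjoint T) K hA hAb (half_pos hε)
  obtain ⟨w, hw1, hwB, hwε⟩ := hyp A' hA' hA'b
  set v := K.starProjection w
  have hv1 : ‖v‖ ≤ 1 := hw1 ▸ K.norm_starProjection_apply_le w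
  have hw'1 : ‖w - v‖ ≤ 1 := by
    rw [← K.starProjection_orthogonal_val, ← hw1]
    exact Kᗮ.norm_starProjection_apply_le w
  have hw'ε : ε / 2 < ‖(1 - MX.proj A) (adjoint T (w - v))‖ := by
    have hsv := hsmall v (K.starProjection_apply_mem w)
    calc ε / 2 < ‖(1 - MX.proj A') (adjoint T w)‖ - ‖(1 - MX.proj A') (adjoint T v)‖ := by
          linarith [mul_le_of_le_one_right (half_pos hε).le hv1]
      _ ≤ ‖(1 - MX.proj A') (adjoint T (w - v))‖ := by
          rw [map_sub, map_sub]; exact norm_sub_norm_le _ _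
      _ ≤ ‖(1 - MX.proj A) (adjoint T (w - v))‖ :=
          MX.norm_one_sub_proj_apply_le_of_subset hA hA' hAA' _
  refine ⟨(‖w - v‖⁻¹ : ℂ) • (w - v), norm_smul_inv_norm fun h => ?_, ?_, fun u hu => ?_,
    (lt_norm_apply_smul_inv_norm ((1 - MX.proj A) ∘L adjoint T) hw'1 (half_pos hε).le hw'ε :)⟩
  · simp [h] at hw'ε
    linarith
  · rw [map_smul, map_sub, hwB, hK v (K.starProjection_apply_mem w)]
  · exact Submodule.inner_right_of_mem_orthogonal hu
      (Kᗮ.smul_mem _ (K.sub_starProjection_mem_orthogonal w))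

/-- Let `X` be coarsely connected with module `H_X`, `B ⊆ Y` measurable, and
`K ≤ χ_B(H_Y)` a finite-dimensional subspace.  If `ε > 0` is such that for every bounded
measurable `A ⊆ X` there is a unit vector `w ∈ χ_B(H_Y)` with `‖(1 − χ_A) T* w‖ > ε`,
then for every bounded measurable `A` there is a unit vector `w̄ ∈ χ_B(H_Y) ∩ K^⊥` with
`‖(1 − χ_A) T* w̄‖ > ε/2`. -/
theorem stmt17 (MX : CoarseModule 𝓔 HX) (MY : CoarseModule 𝓕 HY)
    (hconn : ∀ s : Set X, s.Finite → IsBoundedSet 𝓔 s)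
    (T : HX →L[ℂ] HY)
    (B : Set Y) (hB : B ∈ MY.meas)
    (K : Submodule ℂ HY) [FiniteDimensional ℂ K]
    (hK : ∀ w ∈ K, MY.proj B w = w)
    (ε : ℝ) (hε : 0 < ε)
    (hyp : ∀ A ∈ MX.meas, IsBoundedSet 𝓔 A →
      ∃ w : HY, ‖w‖ = 1 ∧ MY.proj B w = w ∧
        ε < ‖(1 - MX.proj A) ((ContinuousLinearMap.adjoint T) w)‖) :
    ∀ A ∈ MX.meas, IsBoundedSet 𝓔 A →
      ∃ w : HY, ‖w‖ = 1 ∧ MY.proj B w = w ∧ (∀ u ∈ K, inner (𝕜 := ℂ) u w = 0) ∧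
        ε / 2 < ‖(1 - MX.proj A) ((ContinuousLinearMap.adjoint T) w)‖ :=
  stmt17_general MX MY hconn T B K hK ε hε hyp
end
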